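/- (Two-block Gordon lemma) Let V : ℤ → ℝ, E ∈ ℝ, and define the transfer matrices T_E(n) = [[E − V(n), −1],[1, 0]] and M_E(n) = T_E(n)···T_E(1) for n ≥ 1. Suppose there is a sequence n_k → ∞ and a constant 1 ≤ C < ∞ such that for every k: (i) V(j) = V(j + n_k) for all 1 ≤ j ≤ n_k, and (ii) |tr(M_E(n_k))| ≤ C. Then for every nonzero solution φ of φ(n+1) + φ(n−1) + V(n)φ(n) = Eφ(n) normalized so that ‖(φ(1), φ(0))‖ = 1, one has max(‖Φ(n_k)‖, ‖Φ(2n_k)‖) ≥ 1/(2C) for every k, where Φ(n) = (φ(n+1), φ(n)). In particular, no solution tends to zero at +∞ and E is not an eigenvalue of the Schrödinger operator H with potential V. -/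
import Mathlib

open Matrix Filter


/-- Elementary transfer matrix `T_E(n) = [[E − V(n), −1],[1, 0]]`. -/
noncomputable def transferT (V : ℤ → ℝ) (E : ℝ) (n : ℤ) : Matrix (Fin 2) (Fin 2) ℝ :=
  !![E - V n, -1; 1, 0]

/-- Transfer matrix `M_E(n) = T_E(n)···T_E(1)` for `n ≥ 1`, `M_E(0) = I`. -/
noncomputable def transferM (V : ℤ → ℝ) (E : ℝ) : ℕ → Matrix (Fin 2) (Fin 2) ℝ
  | 0 => 1
  | n + 1 => transferT V E (n + 1) * transferM V E n

/-- Euclidean norm on ℝ². -/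
noncomputable def vnorm (v : Fin 2 → ℝ) : ℝ := Real.sqrt (v 0 ^ 2 + v 1 ^ 2)

lemma vnorm_nonneg (v : Fin 2 → ℝ) : 0 ≤ vnorm v := Real.sqrt_nonneg _

lemma vnorm_eq (v : Fin 2 → ℝ) : vnorm v = ‖(WithLp.equiv 2 (Fin 2 → ℝ)).symm v‖ := by
  simp [vnorm, EuclideanSpace.norm_eq, Fin.sum_univ_two, sq_abs]

lemma vnorm_smul (t : ℝ) (v : Fin 2 → ℝ) : vnorm (t • v) = |t| * vnorm v := by
  simp only [vnorm, Pi.smul_apply, smul_eq_mul]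
  rw [show (t * v 0)^2 + (t * v 1)^2 = t^2 * (v 0^2 + v 1^2) by ring,
    Real.sqrt_mul (sq_nonneg t), Real.sqrt_sq_eq_abs]

lemma vnorm_sub_le (u w : Fin 2 → ℝ) : vnorm (u - w) ≤ vnorm u + vnorm w := by
  rw [vnorm_eq, vnorm_eq, vnorm_eq]
  exact norm_sub_le _ _

lemma det_transferM (V : ℤ → ℝ) (E : ℝ) : ∀ m : ℕ, (transferM V E m).det = 1
  | 0 => by simp [transferM]
  | (m+1) => by
    rw [transferM, Matrix.det_mul, det_transferM V E m]
    simp [transferT, Matrix.det_fin_two_of]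

lemma key_vec (M : Matrix (Fin 2) (Fin 2) ℝ) (hdet : M.det = 1) (v : Fin 2 → ℝ) :
    v = M.trace • (M *ᵥ v) - (M * M) *ᵥ v := by
  rw [Matrix.det_fin_two] at hdet
  funext i
  fin_cases i <;>
    simp only [Matrix.mulVec, Matrix.mul_apply, dotProduct, Fin.sum_univ_two,
      Matrix.trace_fin_two, Pi.smul_apply, Pi.sub_apply, smul_eq_mul, Fin.isValue,
      Matrix.cons_val_zero, Matrix.cons_val_one, Matrix.head_cons, Fin.mk_zero, Fin.mk_one]
  · linear_combination (-(v 0)) * hdet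
  · linear_combination (-(v 1)) * hdet

lemma transferM_mulVec (V : ℤ → ℝ) (E : ℝ) (φ : ℤ → ℝ)
    (heq : ∀ m : ℤ, φ (m + 1) + φ (m - 1) + V m * φ m = E * φ m) :
    ∀ m : ℕ, transferM V E m *ᵥ ![φ 1, φ 0] = ![φ ((m:ℤ) + 1), φ (m:ℤ)]
  | 0 => by simp [transferM, Matrix.one_mulVec]
  | (m+1) => by
    rw [transferM, ← Matrix.mulVec_mulVec, transferM_mulVec V E φ heq m]
    have h := heq ((m:ℤ) + 1)
    simp only [add_sub_cancel_right] at h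
    funext i
    fin_cases i <;>
      simp [transferT, Matrix.mulVec, dotProduct, Fin.sum_univ_two] <;>
      push_cast <;> linarith [h]

lemma transferM_congr (V W : ℤ → ℝ) (E : ℝ) :
    ∀ m : ℕ, (∀ j : ℤ, 1 ≤ j → j ≤ (m:ℤ) → V j = W j) →
      transferM V E m = transferM W E m
  | 0, _ => rfl
  | (m+1), h => by
    rw [transferM, transferM, transferM_congr V W E m (fun j h1 h2 => h j h1 (by omega)),
      show transferT V E (m+1) = transferT W E (m+1) by
        simp [transferT, h ((m:ℤ)+1) (by omega) (by push_cast; omega)]]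

lemma transferM_add (V : ℤ → ℝ) (E : ℝ) (N : ℕ) :
    ∀ m : ℕ, transferM V E (N + m) =
      transferM (fun j => V (j + (N:ℤ))) E m * transferM V E N
  | 0 => by simp [transferM]
  | (m+1) => by
    rw [show N + (m+1) = (N + m) + 1 from rfl, transferM, transferM_add V E N m,
      transferM, ← mul_assoc]
    congr 1
    simp only [transferT]
    congr 2
    push_cast
    ring

lemma transferM_two_block (V : ℤ → ℝ) (E : ℝ) (N : ℕ)
    (hrep : ∀ j : ℤ, 1 ≤ j → j ≤ (N:ℤ) → V j = V (j + (N:ℤ))) :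
    transferM V E (2 * N) = transferM V E N * transferM V E N := by
  rw [two_mul, transferM_add V E N N,
    transferM_congr (fun j => V (j + (N:ℤ))) V E N (fun j h1 h2 => (hrep j h1 h2).symm)]

lemma main_bound (V : ℤ → ℝ) (E : ℝ) (N : ℕ) (C : ℝ) (hC : 1 ≤ C)
    (hrep : ∀ j : ℤ, 1 ≤ j → j ≤ (N:ℤ) → V j = V (j + (N:ℤ)))
    (htr : |Matrix.trace (transferM V E N)| ≤ C)
    (φ : ℤ → ℝ) (heq : ∀ m : ℤ, φ (m + 1) + φ (m - 1) + V m * φ m = E * φ m)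
    (hnorm : vnorm ![φ 1, φ 0] = 1) :
    max (vnorm ![φ ((N:ℤ)+1), φ (N:ℤ)]) (vnorm ![φ (2*(N:ℤ)+1), φ (2*(N:ℤ))])
      ≥ 1/(2*C) := by
  set M := transferM V E N with hM
  set v : Fin 2 → ℝ := ![φ 1, φ 0] with hv
  have h1 : M *ᵥ v = ![φ ((N:ℤ)+1), φ (N:ℤ)] := transferM_mulVec V E φ heq N
  have h2 : (M * M) *ᵥ v = ![φ (2*(N:ℤ)+1), φ (2*(N:ℤ))] := by
    rw [← transferM_two_block V E N hrep]
    have h3 := transferM_mulVec V E φ heq (2*N)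
    rwa [Nat.cast_mul, Nat.cast_ofNat] at h3
  have hkey := key_vec M (det_transferM V E N) v
  have hmain : (1:ℝ) ≤ C * vnorm (M *ᵥ v) + vnorm ((M*M) *ᵥ v) := by
    have step : vnorm v ≤ |M.trace| * vnorm (M *ᵥ v) + vnorm ((M*M) *ᵥ v) := by
      calc vnorm v = vnorm (M.trace • (M *ᵥ v) - (M*M) *ᵥ v) := by rw [← hkey]
      _ ≤ vnorm (M.trace • (M *ᵥ v)) + vnorm ((M*M) *ᵥ v) := vnorm_sub_le _ _
      _ = |M.trace| * vnorm (M *ᵥ v) + vnorm ((M*M) *ᵥ v) := by rw [vnorm_smul]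
    rw [hnorm] at step
    have := mul_le_mul_of_nonneg_right htr (vnorm_nonneg (M *ᵥ v))
    linarith
  rw [h1, h2] at hmain
  set a := vnorm ![φ ((N:ℤ)+1), φ (N:ℤ)] with ha'
  set b := vnorm ![φ (2*(N:ℤ)+1), φ (2*(N:ℤ))] with hb'
  have ha : 0 ≤ a := vnorm_nonneg _
  have hb : 0 ≤ b := vnorm_nonneg _
  rw [ge_iff_le, div_le_iff₀ (by positivity)]
  nlinarith [le_max_left a b, le_max_right a b, ha, hb]

lemma zero_propagate (V : ℤ → ℝ) (E : ℝ) (φ : ℤ → ℝ)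
    (heq : ∀ m : ℤ, φ (m + 1) + φ (m - 1) + V m * φ m = E * φ m)
    (h0 : φ 0 = 0) (h1 : φ 1 = 0) : φ = 0 := by
  have fwd : ∀ m : ℕ, φ (m:ℤ) = 0 ∧ φ ((m:ℤ)+1) = 0 := by
    intro m
    induction m with
    | zero => exact ⟨h0, by simpa using h1⟩
    | succ m ih =>
      have h := heq ((m:ℤ)+1)
      simp only [add_sub_cancel_right] at h
      rw [ih.1, ih.2] at h
      refine ⟨by push_cast; exact ih.2, ?_⟩
      push_cast
      linarith
  have bwd : ∀ m : ℕ, φ (-(m:ℤ)) = 0 ∧ φ (-(m:ℤ)+1) = 0 := by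
    intro m
    induction m with
    | zero => exact ⟨by simpa using h0, by simpa using h1⟩
    | succ m ih =>
      have h := heq (-(m:ℤ))
      rw [ih.1, ih.2] at h
      refine ⟨?_, ?_⟩
      · have : (-(((m:ℕ)+1:ℕ)):ℤ) = -(m:ℤ) - 1 := by push_cast; ring
        rw [this]
        linarith
      · have : (-(((m:ℕ)+1:ℕ)):ℤ) + 1 = -(m:ℤ) := by push_cast; ring
        rw [this]
        exact ih.1
  funext z
  rcases le_or_gt 0 z with hz | hz
  · have := (fwd z.toNat).1
    rwa [Int.toNat_of_nonneg hz] at this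
  · have := (bwd (-z).toNat).1
    rw [Int.toNat_of_nonneg (by omega), neg_neg] at this
    exact this

lemma vnorm_eq_zero_iff {v : Fin 2 → ℝ} (h : vnorm v = 0) : v 0 = 0 ∧ v 1 = 0 := by
  have h2 := Real.sqrt_eq_zero'.mp h
  constructor <;> nlinarith [sq_nonneg (v 0), sq_nonneg (v 1)]


/-- Two-block Gordon lemma: if the potential repeats its values on `{1,…,n_k}` once and
the traces `tr M_E(n_k)` are bounded by `C`, then every solution of the difference
equation normalized by `‖(φ(1),φ(0))‖ = 1` obeys
`max(‖Φ(n_k)‖, ‖Φ(2n_k)‖) ≥ 1/(2C)`; in particular no solution tends to zero at `+∞`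
and `E` is not an eigenvalue (there is no nonzero ℓ² solution). -/
theorem two_block_gordon (V : ℤ → ℝ) (E : ℝ) (n : ℕ → ℕ) (C : ℝ)
    (hn : Filter.Tendsto n Filter.atTop Filter.atTop)
    (hC : 1 ≤ C)
    (hrep : ∀ k, ∀ j : ℤ, 1 ≤ j → j ≤ (n k : ℤ) → V j = V (j + (n k : ℤ)))
    (htr : ∀ k, |Matrix.trace (transferM V E (n k))| ≤ C) :
    (∀ φ : ℤ → ℝ,
      (∀ m : ℤ, φ (m + 1) + φ (m - 1) + V m * φ m = E * φ m) →
      vnorm ![φ 1, φ 0] = 1 →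
      ∀ k, max (vnorm ![φ ((n k : ℤ) + 1), φ (n k : ℤ)])
            (vnorm ![φ (2 * (n k : ℤ) + 1), φ (2 * (n k : ℤ))]) ≥ 1 / (2 * C)) ∧
    (∀ φ : ℤ → ℝ,
      (∀ m : ℤ, φ (m + 1) + φ (m - 1) + V m * φ m = E * φ m) →
      Filter.Tendsto (fun m : ℕ => vnorm ![φ ((m : ℤ) + 1), φ (m : ℤ)])
        Filter.atTop (nhds 0) → φ = 0) ∧
    (∀ φ : ℤ → ℝ,
      (∀ m : ℤ, φ (m + 1) + φ (m - 1) + V m * φ m = E * φ m) →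
      Summable (fun m : ℤ => (φ m) ^ 2) → φ = 0) := by
  have part1 : ∀ φ : ℤ → ℝ,
      (∀ m : ℤ, φ (m + 1) + φ (m - 1) + V m * φ m = E * φ m) →
      vnorm ![φ 1, φ 0] = 1 →
      ∀ k, max (vnorm ![φ ((n k : ℤ) + 1), φ (n k : ℤ)])
            (vnorm ![φ (2 * (n k : ℤ) + 1), φ (2 * (n k : ℤ))]) ≥ 1 / (2 * C) :=
    fun φ heq hnorm k => main_bound V E (n k) C hC (hrep k) (htr k) φ heq hnorm
  have part2 : ∀ φ : ℤ → ℝ,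
      (∀ m : ℤ, φ (m + 1) + φ (m - 1) + V m * φ m = E * φ m) →
      Filter.Tendsto (fun m : ℕ => vnorm ![φ ((m : ℤ) + 1), φ (m : ℤ)])
        Filter.atTop (nhds 0) → φ = 0 := by
    intro φ heq hlim
    set r := vnorm ![φ 1, φ 0] with hr
    rcases eq_or_lt_of_le (vnorm_nonneg ![φ 1, φ 0]) with h0 | hpos
    · obtain ⟨e0, e1⟩ := vnorm_eq_zero_iff (v := ![φ 1, φ 0]) h0.symm
      simp only [Matrix.cons_val_zero, Matrix.cons_val_one, Matrix.head_cons] at e0 e1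
      exact zero_propagate V E φ heq e1 e0
    · set ψ : ℤ → ℝ := fun m => r⁻¹ * φ m with hψ
      have heqψ : ∀ m : ℤ, ψ (m + 1) + ψ (m - 1) + V m * ψ m = E * ψ m := fun m => by
        simp only [hψ]
        linear_combination r⁻¹ * heq m
      have hψv : ∀ a b : ℤ, vnorm ![ψ a, ψ b] = r⁻¹ * vnorm ![φ a, φ b] := fun a b => by
        have hv : ![ψ a, ψ b] = r⁻¹ • ![φ a, φ b] := by
          funext i; fin_cases i <;> simp [hψ]
        rw [hv, vnorm_smul, abs_of_pos (inv_pos.mpr hpos)]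
      have hnormψ : vnorm ![ψ 1, ψ 0] = 1 := by
        rw [hψv, ← hr, inv_mul_cancel₀ hpos.ne']
      have hb := fun k => part1 ψ heqψ hnormψ k
      have hlimψ : Tendsto (fun m : ℕ => vnorm ![ψ ((m:ℤ)+1), ψ (m:ℤ)]) atTop (nhds 0) := by
        have h := hlim.const_mul r⁻¹
        rw [mul_zero] at h
        simpa only [hψv] using h
      have t1 : Tendsto (fun k => vnorm ![ψ ((n k:ℤ)+1), ψ (n k:ℤ)]) atTop (nhds 0) :=
        hlimψ.comp hn
      have hn2 : Tendsto (fun k => 2 * n k) atTop atTop :=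
        tendsto_atTop_mono (fun k => Nat.le_mul_of_pos_left (n k) (by norm_num)) hn
      have t2 : Tendsto (fun k => vnorm ![ψ (2*(n k:ℤ)+1), ψ (2*(n k:ℤ))]) atTop (nhds 0) := by
        have h := hlimψ.comp hn2
        exact h.congr fun k => by norm_cast
      have tmax := t1.max t2
      rw [max_self] at tmax
      have hev := tmax.eventually (gt_mem_nhds (show (0:ℝ) < 1/(2*C) by positivity))
      obtain ⟨k, hk⟩ := hev.exists
      exact ((not_le.mpr hk) (hb k)).elim
  refine ⟨part1, part2, ?_⟩
  intro φ heq hsum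
  apply part2 φ heq
  have hc : Tendsto (fun m : ℤ => φ m ^ 2) cofinite (nhds 0) := hsum.tendsto_cofinite_zero
  have i1 : Tendsto (fun m : ℕ => (m:ℤ)) cofinite cofinite :=
    Function.Injective.tendsto_cofinite (fun a b hab => by omega)
  have i2 : Tendsto (fun m : ℕ => (m:ℤ)+1) cofinite cofinite :=
    Function.Injective.tendsto_cofinite (fun a b hab => by omega)
  rw [Nat.cofinite_eq_atTop] at i1 i2
  have t1 : Tendsto (fun m : ℕ => φ (m:ℤ)^2) atTop (nhds 0) := hc.comp i1
  have t2 : Tendsto (fun m : ℕ => φ ((m:ℤ)+1)^2) atTop (nhds 0) := hc.comp i2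
  have hs := (t2.add t1).sqrt
  rw [add_zero, Real.sqrt_zero] at hs
  simpa only [vnorm, Matrix.cons_val_zero, Matrix.cons_val_one, Matrix.head_cons] using hs
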